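/- Consider the cubic u(t) = β₃t³ + β₂t² + β₁t + β₀ on [0, t₁] with t₁ > 0, satisfying u(0) = u₀, u(t₁) = u₁ with κ := (u₁ − u₀)/t₁ > 0, u'(0) = u₀', and u'(t₁) = 0 (local maximum at t₁). If 1.5κ < u₀' < 3κ, then u'(t) > 0 for all t ∈ (0, t₁) and u''(t) < 0 for all t ∈ (0, t₁). -/

import Mathlib

/-!
The four interpolation conditions determine the cubic: `β₁ = u₀'`, `β₃ t₁² = u₀' − 2κ` and
`β₂ t₁ = 3κ − 2u₀'`. Substituting these, the derivatives factor as
`t₁² u'(t) = (t₁ − t) ((t₁ − t) u₀' + t (6κ − 2u₀'))` and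
`−t₁² u''(t) = (t₁ − t) (4u₀' − 6κ) + t (6κ − 2u₀')`,
and on `(0, t₁)` every factor is positive exactly because `1.5κ < u₀' < 3κ`.
-/

open Set

theorem deriv_cubic (a b c d : ℝ) :
    deriv (fun t : ℝ => a * t ^ 3 + b * t ^ 2 + c * t + d) =
      fun t => 3 * a * t ^ 2 + 2 * b * t + c := by
  ext t
  have h := ((((hasDerivAt_pow 3 t).const_mul a).add ((hasDerivAt_pow 2 t).const_mul b)).add
    ((hasDerivAt_id' t).const_mul c)).add_const d
  exact h.deriv.trans (by norm_num; ring)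

theorem deriv_quadratic (a b c : ℝ) :
    deriv (fun t : ℝ => a * t ^ 2 + b * t + c) = fun t => 2 * a * t + b := by
  ext t
  have h := (((hasDerivAt_pow 2 t).const_mul a).add ((hasDerivAt_id' t).const_mul b)).add_const c
  exact h.deriv.trans (by norm_num; ring)

theorem cubic_coeffs_of_hermite {β₁ β₂ β₃ t₁ a κ : ℝ} (ht₁ : t₁ ≠ 0) (h₁ : β₁ = a)
    (hval : β₃ * t₁ ^ 3 + β₂ * t₁ ^ 2 + β₁ * t₁ = κ * t₁)
    (hslope : 3 * β₃ * t₁ ^ 2 + 2 * β₂ * t₁ + β₁ = 0) :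
    β₃ * t₁ ^ 2 = a - 2 * κ ∧ β₂ * t₁ = 3 * κ - 2 * a := by
  have hmean : β₃ * t₁ ^ 2 + β₂ * t₁ + β₁ = κ :=
    mul_right_cancel₀ ht₁ (by linear_combination hval)
  constructor <;> linarith

section HermiteCubic

variable {β₁ β₂ β₃ t₁ a κ t : ℝ}
  (h₃ : β₃ * t₁ ^ 2 = a - 2 * κ) (h₂ : β₂ * t₁ = 3 * κ - 2 * a)
  (ht : t ∈ Ioo 0 t₁) (hlo : 1.5 * κ < a) (hhi : a < 3 * κ)
include h₃ h₂ ht hlo hhi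

theorem cubic_deriv_pos_of_hermite (h₁ : β₁ = a) :
    0 < 3 * β₃ * t ^ 2 + 2 * β₂ * t + β₁ := by
  have hfactor : (3 * β₃ * t ^ 2 + 2 * β₂ * t + β₁) * t₁ ^ 2
      = (t₁ - t) * ((t₁ - t) * a + t * (6 * κ - 2 * a)) := by
    linear_combination (3 * t ^ 2) * h₃ + (2 * t * t₁) * h₂ + t₁ ^ 2 * h₁
  have hpos : 0 < (t₁ - t) * ((t₁ - t) * a + t * (6 * κ - 2 * a)) := by
    have : 0 < t₁ - t := sub_pos.mpr ht.2
    have : 0 < a := by linarith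
    have : 0 < 6 * κ - 2 * a := by linarith
    have := ht.1
    positivity
  exact (mul_pos_iff_of_pos_right (pow_pos (ht.1.trans ht.2) 2)).mp (hfactor ▸ hpos)

theorem cubic_deriv2_neg_of_hermite : 6 * β₃ * t + 2 * β₂ < 0 := by
  have hfactor : (6 * β₃ * t + 2 * β₂) * t₁ ^ 2
      = -((t₁ - t) * (4 * a - 6 * κ) + t * (6 * κ - 2 * a)) := by
    linear_combination (6 * t) * h₃ + (2 * t₁) * h₂
  have hpos : 0 < (t₁ - t) * (4 * a - 6 * κ) + t * (6 * κ - 2 * a) := by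
    have : 0 < t₁ - t := sub_pos.mpr ht.2
    have : 0 < 4 * a - 6 * κ := by linarith
    have : 0 < 6 * κ - 2 * a := by linarith
    have := ht.1
    positivity
  exact neg_of_mul_neg_left (hfactor ▸ neg_neg_of_pos hpos) (sq_nonneg t₁)

end HermiteCubic

theorem stmt_10_general (β₀ β₁ β₂ β₃ t₁ u₀ u₁ u₀' κ : ℝ)
    (ht₁ : 0 < t₁)
    (u : ℝ → ℝ) (hu : u = fun t => β₃ * t ^ 3 + β₂ * t ^ 2 + β₁ * t + β₀)
    (h0 : u 0 = u₀) (h1 : u t₁ = u₁)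
    (hκ : κ = (u₁ - u₀) / t₁)
    (hd0 : deriv u 0 = u₀')
    (hmax : deriv u t₁ = 0)
    (hlo : 1.5 * κ < u₀') (hhi : u₀' < 3 * κ) :
    ∀ t ∈ Set.Ioo 0 t₁, 0 < deriv u t ∧ deriv (deriv u) t < 0 := by
  subst hu
  have hu' := deriv_cubic β₃ β₂ β₁ β₀
  have hu'' : deriv (deriv fun t => β₃ * t ^ 3 + β₂ * t ^ 2 + β₁ * t + β₀) =
      fun t => 6 * β₃ * t + 2 * β₂ := by
    rw [hu', deriv_quadratic]
    ext t
    ring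
  rw [hu'] at hd0 hmax
  have h₁ : β₁ = u₀' := by simpa using hd0
  have hval : β₃ * t₁ ^ 3 + β₂ * t₁ ^ 2 + β₁ * t₁ = κ * t₁ := by
    rw [hκ, div_mul_cancel₀ _ ht₁.ne', ← h0, ← h1]
    ring
  obtain ⟨h₃, h₂⟩ := cubic_coeffs_of_hermite ht₁.ne' h₁ hval hmax
  intro t ht
  rw [hu'', hu']
  exact ⟨cubic_deriv_pos_of_hermite h₃ h₂ ht hlo hhi h₁,
    cubic_deriv2_neg_of_hermite h₃ h₂ ht hlo hhi⟩

/-- Case 2.2 of the `C⁰` trajectory predictor proof (motif `s₊₋ᵦ` ending in a local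
maximum): a cubic on `[0,t₁]` with `u(0) = u₀`, `u(t₁) = u₁`, `κ = (u₁ − u₀)/t₁ > 0`,
`u'(0) = u₀'`, `u'(t₁) = 0`, and `1.5κ < u₀' < 3κ` is strictly increasing and strictly
concave on `(0,t₁)`. -/
theorem stmt_10 (β₀ β₁ β₂ β₃ t₁ u₀ u₁ u₀' κ : ℝ)
    (ht₁ : 0 < t₁)
    (u : ℝ → ℝ) (hu : u = fun t => β₃ * t ^ 3 + β₂ * t ^ 2 + β₁ * t + β₀)
    (h0 : u 0 = u₀) (h1 : u t₁ = u₁)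
    (hκ : κ = (u₁ - u₀) / t₁) (hκpos : 0 < κ)
    (hd0 : deriv u 0 = u₀')
    (hmax : deriv u t₁ = 0)
    (hlo : 1.5 * κ < u₀') (hhi : u₀' < 3 * κ) :
    ∀ t ∈ Set.Ioo 0 t₁, 0 < deriv u t ∧ deriv (deriv u) t < 0 :=
  stmt_10_general β₀ β₁ β₂ β₃ t₁ u₀ u₁ u₀' κ ht₁ u hu h0 h1 hκ hd0 hmax hlo hhi
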